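/- arXiv:2107.13486 — 2 statements merged into one kernel-verified Lean document; each statement's English description precedes it below -/
import Mathlib

section
/- For all p, n ∈ [0,1] and z ∈ [−1,1], the induced classical channel obtained by encoding x ∈ {0,1} as the projector [α_±] = (1/2)(I ± √(1−z²) σ_x + z σ_z), applying the generalized amplitude damping channel, and decoding with the POVM {|x+⟩⟨x+|, |x−⟩⟨x−|} is a binary symmetric channel whose flip probability Tr(A_{p,n}([α_+])·|x−⟩⟨x−|) = Tr(A_{p,n}([α_−])·|x+⟩⟨x+|) = (1 − √(1−z²)·√(1−p))/2 does not depend on the parameter n. -/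
open Matrix

/-- Kraus operators of the generalized amplitude damping channel `A_{p,n}`. -/
noncomputable def gadK (p n : ℝ) : Fin 4 → Matrix (Fin 2) (Fin 2) ℂ
  | 0 => !![(Real.sqrt (1 - n) : ℂ), 0; 0, (Real.sqrt (1 - n) : ℂ) * (Real.sqrt (1 - p) : ℂ)]
  | 1 => !![0, (Real.sqrt (p * (1 - n)) : ℂ); 0, 0]
  | 2 => !![(Real.sqrt n : ℂ) * (Real.sqrt (1 - p) : ℂ), 0; 0, (Real.sqrt n : ℂ)]
  | 3 => !![0, 0; (Real.sqrt (p * n) : ℂ), 0]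

/-- The generalized amplitude damping channel. -/
noncomputable def gad (p n : ℝ) (ρ : Matrix (Fin 2) (Fin 2) ℂ) : Matrix (Fin 2) (Fin 2) ℂ :=
  ∑ i : Fin 4, gadK p n i * ρ * (gadK p n i)ᴴ

/-- Pauli matrices. -/
def sigmaX : Matrix (Fin 2) (Fin 2) ℂ := !![0, 1; 1, 0]
def sigmaZ : Matrix (Fin 2) (Fin 2) ℂ := !![1, 0; 0, -1]

/-- The projector `[α_±]` onto the state with Bloch vector `(±√(1−z²), 0, z)`. -/
noncomputable def alphaProj (s z : ℝ) : Matrix (Fin 2) (Fin 2) ℂ :=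
  (1 / 2 : ℂ) • ((1 : Matrix (Fin 2) (Fin 2) ℂ)
    + ((s * Real.sqrt (1 - z ^ 2) : ℝ) : ℂ) • sigmaX + ((z : ℝ) : ℂ) • sigmaZ)

/-- Projectors onto `|x±⟩ = (|0⟩ ± |1⟩)/√2`. -/
noncomputable def projXplus : Matrix (Fin 2) (Fin 2) ℂ := !![1/2, 1/2; 1/2, 1/2]
noncomputable def projXminus : Matrix (Fin 2) (Fin 2) ℂ := !![1/2, -(1/2); -(1/2), 1/2]

/-- Encoding with `[α_±]` and decoding with the POVM `{|x+⟩⟨x+|, |x−⟩⟨x−|}` induces a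
binary symmetric channel with flip probability `(1 − √(1−z²)·√(1−p))/2`, independent of `n`. -/
theorem gad_induced_binary_symmetric (p n z : ℝ) (hp : p ∈ Set.Icc (0 : ℝ) 1)
    (hn : n ∈ Set.Icc (0 : ℝ) 1) (hz : z ∈ Set.Icc (-1 : ℝ) 1) :
    (gad p n (alphaProj 1 z) * projXminus).trace =
      (((1 - Real.sqrt (1 - z ^ 2) * Real.sqrt (1 - p)) / 2 : ℝ) : ℂ) ∧
    (gad p n (alphaProj (-1) z) * projXplus).trace =
      (((1 - Real.sqrt (1 - z ^ 2) * Real.sqrt (1 - p)) / 2 : ℝ) : ℂ) := by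
  have h1 : Real.sqrt (p * (1 - n)) = Real.sqrt p * Real.sqrt (1 - n) := Real.sqrt_mul hp.1 _
  have h2 : Real.sqrt (p * n) = Real.sqrt p * Real.sqrt n := Real.sqrt_mul hp.1 _
  have a2 : Real.sqrt (1 - n) ^ 2 = 1 - n := Real.sq_sqrt (by linarith [hn.2])
  have c2 : Real.sqrt n ^ 2 = n := Real.sq_sqrt hn.1
  have d2 : Real.sqrt p ^ 2 = p := Real.sq_sqrt hp.1
  have b2 : Real.sqrt (1 - p) ^ 2 = 1 - p := Real.sq_sqrt (by linarith [hp.2])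
  constructor <;>
  · simp only [gad, gadK, alphaProj, projXminus, projXplus, sigmaX, sigmaZ, trace,
      Fin.sum_univ_four, Fin.sum_univ_two, Matrix.mul_apply, Matrix.smul_apply, Matrix.add_apply,
      Matrix.one_apply, Matrix.conjTranspose_apply, diag_apply, Matrix.cons_val',
      Matrix.cons_val_zero, Matrix.cons_val_one, Matrix.head_cons, Matrix.head_fin_const,
      Matrix.empty_val', Matrix.cons_val_fin_one, h1, h2]
    push_cast
    simp only [Complex.ext_iff, Complex.ofReal_re, Complex.ofReal_im]
    norm_num [Complex.add_re, Complex.mul_re, Complex.add_im, Complex.mul_im, Complex.ofReal_re,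
      Complex.ofReal_im, map_ofNat]
    ring_nf
    rw [a2, c2, d2, b2]; ring
end

section
/- Let 0 < λ < μ and let A be a nonnegative random variable with E[A] = 1/λ. Suppose σ_A ∈ [0,1) satisfies the G/M/1 fixed-point equation σ_A = E[exp(−μ(1−σ_A)·A)], and σ_D ∈ [0,1) satisfies the fixed-point equation for deterministic inter-arrival time 1/λ, namely σ_D = exp(−μ(1−σ_D)/λ). Then σ_D ≤ σ_A; i.e., among all inter-arrival distributions with mean 1/λ, the deterministic one minimizes the fixed-point solution σ. -/
/-!
Jensen's inequality gives `exp (-μ (1 - σ_A) / λ) ≤ E[exp (-μ (1 - σ_A) A)] = σ_A`, i.e.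
`g σ_A ≤ 0` for `g s = exp ((μ / λ) (s - 1)) - s`. The function `g` is strictly convex and
vanishes at `σ_D` and at `1`, so it is positive to the left of `σ_D`; hence `σ_D ≤ σ_A`.
-/

open MeasureTheory Real Set

theorem StrictConvexOn.comp_mul_add {f : ℝ → ℝ} (hf : StrictConvexOn ℝ univ f) {a : ℝ}
    (ha : a ≠ 0) (b : ℝ) : StrictConvexOn ℝ univ fun x => f (a * x + b) := by
  refine ⟨convex_univ, fun x _ y _ hxy θ φ hθ hφ hθφ => ?_⟩
  have hne : a * x + b ≠ a * y + b := by
    simpa [add_left_inj, mul_right_inj' ha] using hxy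
  convert hf.2 (mem_univ _) (mem_univ _) hne hθ hφ hθφ using 2
  simp only [smul_eq_mul]
  linear_combination b * hθφ.symm

theorem StrictConvexOn.pos_of_lt_of_eq_zero {s : Set ℝ} {f : ℝ → ℝ}
    (hf : StrictConvexOn ℝ s f) {x y z : ℝ} (hx : x ∈ s) (hz : z ∈ s) (hxy : x < y)
    (hyz : y < z) (hfy : f y = 0) (hfz : f z = 0) : 0 < f x := by
  have hy : y ∈ openSegment ℝ x z := by rw [openSegment_eq_Ioo (hxy.trans hyz)]; exact ⟨hxy, hyz⟩
  have := hf.lt_on_openSegment hx hz (hxy.trans hyz).ne hy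
  rw [hfy, hfz] at this
  exact lt_max_iff.1 this |>.resolve_right (lt_irrefl 0)

theorem exp_integral_le_integral_exp {Ω : Type*} [MeasurableSpace Ω] {μ : Measure Ω}
    [IsProbabilityMeasure μ] {f : Ω → ℝ} (hf : Integrable f μ)
    (hexp : Integrable (fun ω => exp (f ω)) μ) : exp (∫ ω, f ω ∂μ) ≤ ∫ ω, exp (f ω) ∂μ :=
  convexOn_exp.map_integral_le continuous_exp.continuousOn isClosed_univ
    (ae_of_all _ fun _ => mem_univ _) hf hexp

theorem integrable_exp_neg_mul {Ω : Type*} [MeasurableSpace Ω] {μ : Measure Ω}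
    [IsFiniteMeasure μ] {A : Ω → ℝ} (hA : ∀ ω, 0 ≤ A ω) (hAm : AEStronglyMeasurable A μ)
    {c : ℝ} (hc : 0 ≤ c) : Integrable (fun ω => exp (-c * A ω)) μ :=
  .of_bound (continuous_exp.comp_aestronglyMeasurable (hAm.const_mul (-c))) 1
    (ae_of_all _ fun ω => by
      rw [norm_of_nonneg (exp_pos _).le, exp_le_one_iff]
      nlinarith [hA ω])

/-- Among all inter-arrival distributions with mean `1/λ` in a stable G/M/1 queue with
service rate `μ > λ`, the deterministic inter-arrival time minimizes the fixed-point
solution `σ` of `σ = E[exp(−μ(1−σ)A)]`: if `σ_A` solves the fixed-point equation for an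
arrival time `A ≥ 0` with `E[A] = 1/λ`, and `σ_D` solves `σ_D = exp(−μ(1−σ_D)/λ)`
(deterministic arrivals), then `σ_D ≤ σ_A`. -/
theorem deterministic_arrivals_minimize_sigma
    {Ω : Type*} [MeasureSpace Ω] [IsProbabilityMeasure (volume : Measure Ω)]
    (lam μ : ℝ) (hlam : 0 < lam) (hlm : lam < μ)
    (A : Ω → ℝ) (hA : ∀ ω, 0 ≤ A ω) (hAint : Integrable A)
    (hmean : ∫ ω, A ω = 1 / lam)
    (σA : ℝ) (hσA : σA ∈ Set.Ico (0 : ℝ) 1)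
    (hfixA : σA = ∫ ω, Real.exp (-(μ * (1 - σA)) * A ω))
    (σD : ℝ) (hσD : σD ∈ Set.Ico (0 : ℝ) 1)
    (hfixD : σD = Real.exp (-(μ * (1 - σD)) / lam)) :
    σD ≤ σA := by
  have hμ : 0 < μ := hlam.trans hlm
  set g : ℝ → ℝ := fun s => exp (μ / lam * s + -(μ / lam)) - s
  have hconv : StrictConvexOn ℝ univ g :=
    (strictConvexOn_exp.comp_mul_add (by positivity) _).sub_concaveOn (concaveOn_id convex_univ)
  have hg_eq (s : ℝ) : g s = exp (-(μ * (1 - s)) / lam) - s := by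
    simp only [g]; congr 2; field_simp; ring
  have hgD : g σD = 0 := by rw [hg_eq, ← hfixD, sub_self]
  have hg1 : g 1 = 0 := by simp [g]
  have hgA : g σA ≤ 0 := by
    have hc : 0 ≤ μ * (1 - σA) := mul_nonneg hμ.le (by linarith [hσA.2])
    have hJensen := exp_integral_le_integral_exp (hAint.const_mul (-(μ * (1 - σA))))
      (integrable_exp_neg_mul hA hAint.aestronglyMeasurable hc)
    rw [integral_const_mul, hmean, mul_one_div, ← hfixA] at hJensen
    rw [hg_eq]
    linarith
  by_contra! hlt
  exact (hconv.pos_of_lt_of_eq_zero (mem_univ _) (mem_univ _) hlt hσD.2 hgD hg1).not_ge hgA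
end
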